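/- arXiv:2302.11881 — 6 statements merged into one kernel-verified Lean document; each statement's English description precedes it below -/
import Mathlib

section
/- Let M : ℝ^k → Matrix (Fin n) (Fin m) ℝ be a matrix-valued function each of whose entries is real-analytic, and let r be the maximum of rank(M(x)) over all x ∈ ℝ^k, attained at some point. Then the set {x ∈ ℝ^k : rank(M(x)) < r} has Lebesgue measure zero; in particular rank(M(x)) = r for almost all x. -/
/-!
If `M x₀` has rank `r`, some `r × r` minor of `M` is nonzero at `x₀`. This minor is a real-analytic
function on `ℝ^k` that is not identically zero, so it vanishes only on a null set: in one variable
its zeros are isolated, hence countable, and in general one slices along the first coordinate and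
uses Fubini. Wherever the minor is nonzero, the rank of `M x` is at least `r`.
-/

open MeasureTheory Filter Set Module Submodule

theorem exists_linearIndependent_comp_fin_finrank {K V ι : Type*} [DivisionRing K] [AddCommGroup V]
    [Module K V] (v : ι → V) [Module.Finite K (span K (range v))] :
    ∃ s : Fin (finrank K (span K (range v))) → ι, LinearIndependent K (v ∘ s) := by
  obtain ⟨w, hw, -, hli⟩ := exists_fun_fin_finrank_span_eq K (range v)
  choose s hs using hw
  exact ⟨s, by rwa [show v ∘ s = w from funext hs]⟩

namespace Matrix

variable {m n ι K : Type*} [Fintype n] [Field K]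

theorem exists_submatrix_det_ne_zero [Fintype m] (A : Matrix m n K) :
    ∃ (f : Fin A.rank → m) (g : Fin A.rank → n), (A.submatrix f g).det ≠ 0 := by
  obtain ⟨g, hg⟩ : ∃ g : Fin A.rank → n, LinearIndependent K (A.col ∘ g) :=
    A.rank_eq_finrank_span_cols ▸ exists_linearIndependent_comp_fin_finrank A.col
  set B := A.submatrix id g
  have hB : B.rank = A.rank := by
    rw [← rank_transpose]
    simpa using (show LinearIndependent K Bᵀ.row from hg).rank_matrix
  obtain ⟨f, hf⟩ : ∃ f : Fin B.rank → m, LinearIndependent K (B.row ∘ f) :=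
    B.rank_eq_finrank_span_row ▸ exists_linearIndependent_comp_fin_finrank B.row
  have hrows : LinearIndependent K (A.submatrix (f ∘ Fin.cast hB.symm) g).row :=
    hf.comp _ (Fin.cast_injective _)
  exact ⟨_, g, ((isUnit_iff_isUnit_det _).mp (linearIndependent_rows_iff_isUnit.mp hrows)).ne_zero⟩

theorem card_le_rank_of_submatrix_det_ne_zero [Fintype ι] [DecidableEq ι] (A : Matrix m n K)
    (f : ι → m) (g : ι → n) (h : (A.submatrix f g).det ≠ 0) : Fintype.card ι ≤ A.rank :=
  calc Fintype.card ι = (A.submatrix f g).rank :=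
        (rank_of_isUnit _ ((isUnit_iff_isUnit_det _).mpr h.isUnit)).symm
    _ ≤ A.rank := rank_submatrix_le A f g

end Matrix

theorem AnalyticOnNhd.matrix_det {𝕜 E ι : Type*} [NontriviallyNormedField 𝕜] [NormedAddCommGroup E]
    [NormedSpace 𝕜 E] [Fintype ι] [DecidableEq ι] {A : E → Matrix ι ι 𝕜} {s : Set E}
    (hA : ∀ i j, AnalyticOnNhd 𝕜 (fun x ↦ A x i j) s) : AnalyticOnNhd 𝕜 (fun x ↦ (A x).det) s := by
  simp_rw [Matrix.det_apply']
  exact Finset.analyticOnNhd_fun_sum _ fun σ _ ↦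
    analyticOnNhd_const.mul (Finset.analyticOnNhd_fun_prod _ fun i _ ↦ hA (σ i) i)

theorem AnalyticOnNhd.ae_ne_zero {𝕜 E : Type*} [NontriviallyNormedField 𝕜] [MeasurableSpace 𝕜]
    [SecondCountableTopology 𝕜] [PreconnectedSpace 𝕜] [NormedAddCommGroup E] [NormedSpace 𝕜 E]
    {μ : Measure 𝕜} [NullSingletonClass μ] {f : 𝕜 → E} (hf : AnalyticOnNhd 𝕜 f univ)
    {z₀ : 𝕜} (hz₀ : f z₀ ≠ 0) : ∀ᵐ z ∂μ, f z ≠ 0 := by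
  have hcod := (hf.eqOn_zero_or_eventually_ne_zero_of_preconnected isPreconnected_univ).resolve_left
    fun h ↦ hz₀ (h (mem_univ z₀))
  rw [← Measure.restrict_univ (μ := μ)]
  exact ae_restrict_le_codiscreteWithin MeasurableSet.univ hcod

theorem MeasureTheory.ae_pi_fin_succ_iff {k : ℕ} {α : Type*} [MeasureSpace α]
    [SigmaFinite (volume : Measure α)] {p : (Fin (k + 1) → α) → Prop} :
    (∀ᵐ x, p x) ↔ ∀ᵐ q : α × (Fin k → α), p (Fin.cons q.1 q.2) := by
  rw [← (volume_preserving_piFinSuccAbove (fun _ ↦ α) 0).symm.map_eq,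
    (MeasurableEquiv.measurableEmbedding _).ae_map_iff, Measure.volume_eq_prod]
  simp only [MeasurableEquiv.piFinSuccAbove_symm_apply, Fin.insertNthEquiv, Fin.insertNth_zero']
  rfl

theorem AnalyticOnNhd.ae_ne_zero_pi {E : Type*} [NormedAddCommGroup E] [NormedSpace ℝ E] {k : ℕ}
    {f : (Fin k → ℝ) → E} (hf : AnalyticOnNhd ℝ f univ) {x₀ : Fin k → ℝ} (hx₀ : f x₀ ≠ 0) :
    ∀ᵐ x, f x ≠ 0 := by
  induction k with
  | zero => exact .of_forall fun x ↦ Subsingleton.elim x x₀ ▸ hx₀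
  | succ k ih =>
    have hg : AnalyticOnNhd ℝ (fun q : ℝ × (Fin k → ℝ) ↦ f (Fin.cons q.1 q.2)) univ :=
      hf.comp ((Fin.consEquivL ℝ fun _ ↦ ℝ).toContinuousLinearMap.analyticOnNhd univ)
        (mapsTo_univ _ _)
    have hslice (t : ℝ) : AnalyticOnNhd ℝ (fun y ↦ f (Fin.cons t y)) univ :=
      hg.comp (analyticOnNhd_const.prod analyticOnNhd_id) (mapsTo_univ _ _)
    rw [ae_pi_fin_succ_iff, Measure.volume_eq_prod, Measure.ae_prod_iff_ae_ae
      (isOpen_ne_fun (continuousOn_univ.mp hg.continuousOn) continuous_const).measurableSet]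
    obtain ⟨t₀, y₀, rfl⟩ : ∃ t y, x₀ = Fin.cons t y := ⟨_, _, (Fin.cons_self_tail x₀).symm⟩
    have hfirst : ∀ᵐ t : ℝ, f (Fin.cons t y₀) ≠ 0 :=
      (hg.comp (analyticOnNhd_id.prod analyticOnNhd_const) (mapsTo_univ _ _)).ae_ne_zero
        (z₀ := t₀) hx₀
    filter_upwards [hfirst] with t ht using ih (hslice t) ht

/-- If every entry of `M : ℝ^k → Matrix (Fin n) (Fin m) ℝ` is real-analytic and the maximum
rank `r` of `M x` is attained, then `{x | rank (M x) < r}` has Lebesgue measure zero;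
in particular `rank (M x) = r` for almost all `x`. -/
theorem analytic_matrix_rank_ae_max {k n m : ℕ} (M : (Fin k → ℝ) → Matrix (Fin n) (Fin m) ℝ)
    (r : ℕ) (hM : ∀ i j, AnalyticOnNhd ℝ (fun x => M x i j) Set.univ)
    (hub : ∀ x, (M x).rank ≤ r) (hatt : ∃ x, (M x).rank = r) :
    volume {x : Fin k → ℝ | (M x).rank < r} = 0 ∧
    ∀ᵐ x : Fin k → ℝ ∂volume, (M x).rank = r := by
  obtain ⟨x₀, rfl⟩ := hatt
  obtain ⟨f, g, hdet⟩ := (M x₀).exists_submatrix_det_ne_zero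
  have hminor : ∀ᵐ x, ((M x).submatrix f g).det ≠ 0 :=
    (AnalyticOnNhd.matrix_det fun i j ↦ hM (f i) (g j)).ae_ne_zero_pi hdet
  have hge : ∀ᵐ x, (M x₀).rank ≤ (M x).rank := hminor.mono fun x hx ↦ by
    simpa using (M x).card_le_rank_of_submatrix_det_ne_zero f g hx
  exact ⟨by simpa [ae_iff] using hge, hge.mono fun x hx ↦ (hub x).antisymm hx⟩
end

section
/- For any A ∈ ℝ^{n×n}, any subspace V ⊆ ℝ^n, and any real h, the subspace e^{Ah}·V is contained in Γ_A V := Σ_{i=0}^{n-1} A^i V. -/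
/-- `Γ_A V = Σ_{i=0}^{n-1} A^i V`. -/
def gammaSub {n : ℕ} (A : Matrix (Fin n) (Fin n) ℝ) (V : Submodule ℝ (Fin n → ℝ)) :
    Submodule ℝ (Fin n → ℝ) :=
  ⨆ i : Fin n, Submodule.map ((A ^ (i : ℕ)).mulVecLin) V

/-!
By Cayley–Hamilton every power `A ^ k` is a linear combination of `A ^ 0, …, A ^ (n - 1)`, so it
maps `V` into `Γ_A V`. The matrices mapping `V` into `Γ_A V` form a linear subspace, closed since
it is finite-dimensional, and `e^{hA} = ∑ hᵏ/k! • Aᵏ` is a limit of elements of it.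
-/

open Polynomial

theorem Matrix.pow_mem_span_pow_lt {R : Type*} [CommRing R] [Nontrivial R] {n : ℕ}
    (A : Matrix (Fin n) (Fin n) R) (k : ℕ) :
    A ^ k ∈ Submodule.span R (Set.range fun i : Fin n => A ^ (i : ℕ)) := by
  obtain rfl | hn := Nat.eq_zero_or_pos n
  · rw [Subsingleton.elim (A ^ k) 0]
    exact zero_mem _
  have hdeg : (X ^ k %ₘ A.charpoly).natDegree < n := by
    simpa using natDegree_modByMonic_lt (X ^ k) A.charpoly_monic
      (ne_of_apply_ne natDegree (by simpa using hn.ne'))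
  rw [pow_eq_aeval_mod_charpoly, aeval_eq_sum_range' hdeg]
  exact Submodule.sum_mem _ fun i hi =>
    Submodule.smul_mem _ _ (Submodule.subset_span ⟨⟨i, Finset.mem_range.1 hi⟩, rfl⟩)

theorem NormedSpace.exp_mem_of_forall_pow_mem {𝕂 𝔸 : Type*} [Field 𝕂] [CharZero 𝕂] [Ring 𝔸]
    [Algebra 𝕂 𝔸] [TopologicalSpace 𝔸] [IsTopologicalRing 𝔸] {s : Submodule 𝕂 𝔸}
    (hs : IsClosed (s : Set 𝔸)) {x : 𝔸} (hx : ∀ k : ℕ, x ^ k ∈ s) :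
    NormedSpace.exp x ∈ s := by
  rw [NormedSpace.exp_eq_tsum 𝕂]
  exact tsum_mem hs fun k => s.smul_mem _ (hx k)

theorem Matrix.mem_comap_toLin'_compatibleMaps_iff {R m n : Type*} [CommRing R] [Fintype n]
    [DecidableEq n] {V : Submodule R (n → R)} {W : Submodule R (m → R)} {M : Matrix m n R} :
    M ∈ (Submodule.compatibleMaps V W).comap Matrix.toLin'.toLinearMap ↔
      V.map M.mulVecLin ≤ W := by
  rw [Submodule.map_le_iff_le_comap]
  rfl

/-- For any `A`, any subspace `V ⊆ ℝ^n` and any real `h`, `e^{Ah}·V ⊆ Γ_A V`. -/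
theorem exp_map_le_gamma {n : ℕ} (A : Matrix (Fin n) (Fin n) ℝ)
    (V : Submodule ℝ (Fin n → ℝ)) (h : ℝ) :
    Submodule.map (NormedSpace.exp (h • A)).mulVecLin V ≤ gammaSub A V := by
  set S := (Submodule.compatibleMaps V (gammaSub A V)).comap Matrix.toLin'.toLinearMap
  have hlow : ∀ i : Fin n, A ^ (i : ℕ) ∈ S := fun i =>
    Matrix.mem_comap_toLin'_compatibleMaps_iff.2 <|
      le_iSup (fun i : Fin n => V.map (A ^ (i : ℕ)).mulVecLin) i
  have hpow : ∀ k : ℕ, A ^ k ∈ S := fun k =>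
    Submodule.span_le.2 (Set.range_subset_iff.2 hlow) (A.pow_mem_span_pow_lt k)
  refine Matrix.mem_comap_toLin'_compatibleMaps_iff.1 <|
    NormedSpace.exp_mem_of_forall_pow_mem (𝕂 := ℝ) S.closed_of_finiteDimensional fun k => ?_
  rw [_root_.smul_pow]
  exact S.smul_mem _ (hpow k)
end

section
/- For matrix pairs (A_1, B_1) and (A_2, B_2) with controllability matrices C_i = [B_i, A_iB_i, …, A_i^{n-1}B_i], the following holds for every h ∈ ℝ: rank [C_2, e^{A_2 h} C_1] ≤ rank [C_2, C_1]. -/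
/-- The controllability matrix `C = [B, AB, …, A^{n-1}B]` (columns indexed by `Fin n × Fin m`). -/
def ctrlMat {n m : ℕ} (A : Matrix (Fin n) (Fin n) ℝ) (B : Matrix (Fin n) (Fin m) ℝ) :
    Matrix (Fin n) (Fin n × Fin m) ℝ :=
  fun i p => (A ^ (p.1 : ℕ) * B) i p.2

/-! The column space of `C₂` is `A₂`-invariant: `A₂` shifts the blocks `A₂ⁱB₂` of `C₂` by one,
and `A₂ⁿB₂` falls back into the column space by Cayley–Hamilton. The matrices leaving a subspace
invariant form a subalgebra, which is closed (being finite-dimensional), so it also contains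
`e^{-A₂h}`. Multiplying by the invertible `e^{-A₂h}` turns `[C₂, e^{A₂h}C₁]` into
`[e^{-A₂h}C₂, C₁]`, whose first block has its columns in the column space of `C₂`. -/

open NormedSpace Matrix Polynomial

namespace Matrix

variable {ι R : Type*}

theorem pow_mem_span_pow_lt_card [Fintype ι] [DecidableEq ι] [CommRing R] [Nontrivial R]
    (A : Matrix ι ι R) (k : ℕ) :
    A ^ k ∈ Submodule.span R (Set.range fun i : Fin (Fintype.card ι) => A ^ (i : ℕ)) := by
  rw [pow_eq_aeval_mod_charpoly, aeval_eq_sum_range]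
  refine Submodule.sum_mem _ fun i _ => ?_
  by_cases hi : i < Fintype.card ι
  · exact Submodule.smul_mem _ _ (Submodule.subset_span ⟨⟨i, hi⟩, rfl⟩)
  · have hdeg : (X ^ k %ₘ A.charpoly).degree < i := by
      refine (degree_modByMonic_lt _ A.charpoly_monic).trans_le ?_
      rw [charpoly_degree_eq_dim]
      exact_mod_cast not_lt.mp hi
    rw [coeff_eq_zero_of_degree_lt hdeg, zero_smul]
    exact Submodule.zero_mem _

theorem range_mulVecLin_fromCols [CommSemiring R] {m n : Type*} [Fintype m] [Fintype n]
    (X : Matrix ι m R) (Y : Matrix ι n R) :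
    LinearMap.range (fromCols X Y).mulVecLin =
      LinearMap.range X.mulVecLin ⊔ LinearMap.range Y.mulVecLin := by
  simp only [range_mulVecLin, ← Submodule.span_union]
  congr 1
  ext
  simp [col_apply']

theorem rank_fromCols_le_of_range_le [Fintype ι] {K : Type*} [Field K] {m m' n : Type*}
    [Fintype m] [Fintype m'] [Fintype n] {X : Matrix ι m K} {X' : Matrix ι m' K}
    (Y : Matrix ι n K) (hX : LinearMap.range X.mulVecLin ≤ LinearMap.range X'.mulVecLin) :
    (fromCols X Y).rank ≤ (fromCols X' Y).rank := by
  unfold rank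
  rw [range_mulVecLin_fromCols, range_mulVecLin_fromCols]
  exact Submodule.finrank_mono (sup_le_sup_right hX _)

variable [Fintype ι] [DecidableEq ι]

def invtSubalgebra [CommSemiring R] (p : Submodule R (ι → R)) : Subalgebra R (Matrix ι ι R) where
  carrier := {M | p ∈ Module.End.invtSubmodule M.mulVecLin}
  mul_mem' {M N} hM hN := by
    simp only [Set.mem_ofPred_eq, mulVecLin_mul] at hM hN ⊢
    exact fun x hx => hM (hN hx)
  add_mem' {M N} hM hN := by
    simp only [Set.mem_ofPred_eq, mulVecLin_add] at hM hN ⊢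
    exact fun x hx => p.add_mem (hM hx) (hN hx)
  algebraMap_mem' r x hx := by
    simpa [Algebra.algebraMap_eq_smul_one] using p.smul_mem r hx

theorem mem_invtSubalgebra [CommSemiring R] {p : Submodule R (ι → R)} {M : Matrix ι ι R} :
    M ∈ invtSubalgebra p ↔ p ∈ Module.End.invtSubmodule M.mulVecLin :=
  Iff.rfl

theorem range_mulVecLin_mul_le [CommSemiring R] {n : Type*} {M : Matrix ι ι R} {N : Matrix ι n R}
    [Fintype n] (hM : M ∈ invtSubalgebra (LinearMap.range N.mulVecLin)) :
    LinearMap.range (M * N).mulVecLin ≤ LinearMap.range N.mulVecLin := by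
  rw [mulVecLin_mul, LinearMap.range_comp]
  exact (Module.End.mem_invtSubmodule_iff_map_le _).mp hM

/-- A subalgebra of a finite-dimensional algebra is closed, so it is closed under `exp`. -/
theorem exp_mem_invtSubalgebra {𝕜 : Type*} [RCLike 𝕜] {p : Submodule 𝕜 (ι → 𝕜)} {M : Matrix ι ι 𝕜}
    (hM : M ∈ invtSubalgebra p) : exp M ∈ invtSubalgebra p :=
  exp_mem (s := invtSubalgebra p)
    (Subalgebra.toSubmodule (invtSubalgebra p)).closed_of_finiteDimensional hM

end Matrix

section Controllability

variable {n m : ℕ} (A : Matrix (Fin n) (Fin n) ℝ) (B : Matrix (Fin n) (Fin m) ℝ)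

theorem ctrlMat_col (i : Fin n) (j : Fin m) :
    (ctrlMat A B).col (i, j) = A ^ (i : ℕ) *ᵥ B.col j := by
  ext
  simp [ctrlMat, col_apply, mulVec, dotProduct, mul_apply]

theorem pow_mulVec_col_mem_range_ctrlMat (k : ℕ) (j : Fin m) :
    A ^ k *ᵥ B.col j ∈ LinearMap.range (ctrlMat A B).mulVecLin := by
  refine (Submodule.span_le (p := (LinearMap.range (ctrlMat A B).mulVecLin).comap
      (LinearMap.applyₗ (B.col j) ∘ₗ (toLin' : Matrix _ _ ℝ ≃ₗ[ℝ] _).toLinearMap))).mpr ?_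
    (A.pow_mem_span_pow_lt_card k)
  rintro _ ⟨i, rfl⟩
  rw [SetLike.mem_coe, Submodule.mem_comap, range_mulVecLin]
  refine Submodule.subset_span ⟨(Fin.cast (Fintype.card_fin n) i, j), ?_⟩
  rw [ctrlMat_col, Fin.val_cast]
  rfl

theorem mem_invtSubalgebra_range_ctrlMat :
    A ∈ invtSubalgebra (LinearMap.range (ctrlMat A B).mulVecLin) := by
  rw [mem_invtSubalgebra, Module.End.mem_invtSubmodule, range_mulVecLin, Submodule.span_le]
  rintro _ ⟨⟨i, j⟩, rfl⟩
  rw [SetLike.mem_coe, Submodule.mem_comap, mulVecLin_apply, ctrlMat_col, mulVec_mulVec,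
    ← pow_succ', ← range_mulVecLin]
  exact pow_mulVec_col_mem_range_ctrlMat A B (i + 1) j

end Controllability

/-- For every `h ∈ ℝ`, `rank [C₂, e^{A₂h}C₁] ≤ rank [C₂, C₁]`. -/
theorem rank_exp_concat_le {n m₁ m₂ : ℕ}
    (A₁ : Matrix (Fin n) (Fin n) ℝ) (B₁ : Matrix (Fin n) (Fin m₁) ℝ)
    (A₂ : Matrix (Fin n) (Fin n) ℝ) (B₂ : Matrix (Fin n) (Fin m₂) ℝ) (h : ℝ) :
    (Matrix.fromCols (ctrlMat A₂ B₂)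
        (NormedSpace.exp (h • A₂) * ctrlMat A₁ B₁)).rank ≤
      (Matrix.fromCols (ctrlMat A₂ B₂) (ctrlMat A₁ B₁)).rank := by
  have hE : IsUnit (exp (h • A₂)).det :=
    (isUnit_iff_isUnit_det (exp (h • A₂))).mp (Matrix.isUnit_exp (h • A₂))
  have hE_inv : (exp (h • A₂))⁻¹ ∈ invtSubalgebra (LinearMap.range (ctrlMat A₂ B₂).mulVecLin) := by
    rw [← Matrix.exp_neg]
    exact exp_mem_invtSubalgebra <| neg_mem <|
      Subalgebra.smul_mem _ (mem_invtSubalgebra_range_ctrlMat A₂ B₂) h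
  calc (fromCols (ctrlMat A₂ B₂) (exp (h • A₂) * ctrlMat A₁ B₁)).rank
      = ((exp (h • A₂))⁻¹ * fromCols (ctrlMat A₂ B₂) (exp (h • A₂) * ctrlMat A₁ B₁)).rank :=
        (rank_mul_eq_right_of_isUnit_det _ _ (isUnit_nonsing_inv_det _ hE)).symm
    _ = (fromCols ((exp (h • A₂))⁻¹ * ctrlMat A₂ B₂) (ctrlMat A₁ B₁)).rank := by
        rw [mul_fromCols, ← Matrix.mul_assoc, nonsing_inv_mul _ hE, Matrix.one_mul]
    _ ≤ (fromCols (ctrlMat A₂ B₂) (ctrlMat A₁ B₁)).rank :=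
        rank_fromCols_le_of_range_le _ (range_mulVecLin_mul_le hE_inv)
end

section
/- For matrix pairs (A_1, B_1) and (A_2, B_2), rank [C_2, e^{A_2 h} C_1] = rank [C_2, C_1] for almost all h ∈ ℝ (all but a measure-zero set), where C_i = [B_i, A_iB_i, …, A_i^{n-1}B_i]. -/
/-!
For every `h`, `e^{-A₂h}` is a limit of polynomials in `A₂`, so it lies in the (closed,
finite-dimensional) algebra generated by `A₂`; by Cayley–Hamilton this algebra preserves
`span C₂`. Writing `[C₂, e^{A₂h}C₁] = e^{A₂h} [e^{-A₂h}C₂, C₁]` gives the upper bound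
`rank [C₂, C₁]` for every `h`.

Conversely, pick `U`, `V` with `U [C₂, C₁] V = 1` of size `r = rank [C₂, C₁]`. Then
`det (U [C₂, e^{A₂h}C₁] V)` is real-analytic in `h` and equals `1` at `h = 0`, so its zeros are
isolated, hence countable, hence null; off them the rank is at least `r`.
-/

open MeasureTheory

open Set Matrix

section Analytic

variable {𝕜 E : Type*} [NontriviallyNormedField 𝕜] [NormedAddCommGroup E] [NormedSpace 𝕜 E]
  {s : Set E} {l m n : Type*} [Fintype m]

theorem AnalyticOnNhd.matrix_mul_apply {F : E → Matrix l m 𝕜} {G : E → Matrix m n 𝕜}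
    (hF : ∀ i j, AnalyticOnNhd 𝕜 (fun x => F x i j) s)
    (hG : ∀ i j, AnalyticOnNhd 𝕜 (fun x => G x i j) s) (i : l) (j : n) :
    AnalyticOnNhd 𝕜 (fun x => (F x * G x) i j) s := by
  simp only [Matrix.mul_apply]
  exact Finset.analyticOnNhd_fun_sum _ fun k _ => (hF i k).mul (hG k j)

theorem AnalyticOnNhd.matrix_det_s11 [Fintype n] [DecidableEq n] {F : E → Matrix n n 𝕜}
    (hF : ∀ i j, AnalyticOnNhd 𝕜 (fun x => F x i j) s) :
    AnalyticOnNhd 𝕜 (fun x => (F x).det) s := by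
  simp only [Matrix.det_apply']
  exact Finset.analyticOnNhd_fun_sum _ fun σ _ =>
    analyticOnNhd_const.mul (Finset.analyticOnNhd_fun_prod _ fun i _ => hF (σ i) i)

end Analytic

theorem Matrix.analyticOnNhd_exp_smul_apply {n : Type*} [Fintype n] [DecidableEq n]
    (A : Matrix n n ℝ) (i j : n) :
    AnalyticOnNhd ℝ (fun t : ℝ => NormedSpace.exp (t • A) i j) univ := by
  -- Matrices carry no global norm; any algebra norm will do, as the claim is about entries.
  let _ : SeminormedRing (Matrix n n ℝ) := Matrix.linftyOpSemiNormedRing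
  let _ : NormedRing (Matrix n n ℝ) := Matrix.linftyOpNormedRing
  let _ : NormedAlgebra ℝ (Matrix n n ℝ) := Matrix.linftyOpNormedAlgebra
  intro t _
  have hexp : AnalyticAt ℝ (fun t : ℝ => NormedSpace.exp (t • A)) t :=
    (NormedSpace.exp_analytic (𝕂 := ℝ) (t • A)).comp (f := fun s : ℝ => s • A)
      (analyticAt_id.smul analyticAt_const)
  exact ((Matrix.entryLinearMap ℝ ℝ i j).toContinuousLinearMap.analyticAt _).comp hexp

theorem AnalyticOnNhd.measure_setOf_eq_zero {E : Type*} [NormedAddCommGroup E]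
    [NormedSpace ℝ E] (μ : Measure ℝ) [NullSingletonClass μ] {g : ℝ → E}
    (hg : AnalyticOnNhd ℝ g univ) {x₀ : ℝ} (hx₀ : g x₀ ≠ 0) : μ {x | g x = 0} = 0 := by
  rcases hg.eqOn_zero_or_eventually_ne_zero_of_preconnected isPreconnected_univ with h | h
  · exact absurd (h (mem_univ x₀)) hx₀
  · have hdisc : IsDiscrete ({x | g x = 0} ∩ univ) := isDiscrete_of_codiscreteWithin h
    rw [inter_univ] at hdisc
    exact ((HereditarilyLindelofSpace.isLindelof _).countable_of_isDiscrete hdisc).measure_zero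
      μ

theorem Matrix.exists_mul_mul_eq_one {K : Type*} [Field K] {m ι : Type*} [Fintype m]
    [Fintype ι] (M : Matrix m ι K) :
    ∃ (U : Matrix (Fin M.rank) m K) (V : Matrix ι (Fin M.rank) K), U * M * V = 1 := by
  classical
  set R := LinearMap.range M.mulVecLin
  let e : R ≃ₗ[K] (Fin M.rank → K) := LinearEquiv.ofFinrankEq _ _ (Module.finrank_fin_fun K).symm
  obtain ⟨π, hπ⟩ := R.subtype.exists_leftInverse_of_injective R.ker_subtype
  obtain ⟨σ, hσ⟩ := M.mulVecLin.rangeRestrict.exists_rightInverse_of_surjective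
    M.mulVecLin.range_rangeRestrict
  refine ⟨LinearMap.toMatrix' (e.toLinearMap ∘ₗ π),
    LinearMap.toMatrix' (σ ∘ₗ e.symm.toLinearMap), Matrix.toLin'.injective ?_⟩
  rw [Matrix.toLin'_mul, Matrix.toLin'_mul, Matrix.toLin'_toMatrix', Matrix.toLin'_toMatrix',
    Matrix.toLin'_one]
  change e.toLinearMap ∘ₗ (π ∘ₗ R.subtype) ∘ₗ (M.mulVecLin.rangeRestrict ∘ₗ σ) ∘ₗ
    e.symm.toLinearMap = LinearMap.id
  rw [hπ, hσ, LinearMap.id_comp, LinearMap.id_comp, LinearEquiv.comp_coe, e.symm_trans_self]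
  rfl

theorem ae_rank_le_rank_of_analyticOnNhd (μ : Measure ℝ) [NullSingletonClass μ] {m ι : Type*}
    [Fintype m] [Fintype ι] {F : ℝ → Matrix m ι ℝ}
    (hF : ∀ i j, AnalyticOnNhd ℝ (fun x => F x i j) univ) (x₀ : ℝ) :
    ∀ᵐ x ∂μ, (F x₀).rank ≤ (F x).rank := by
  classical
  obtain ⟨U, V, hUV⟩ := (F x₀).exists_mul_mul_eq_one
  have hdet : AnalyticOnNhd ℝ (fun x => (U * F x * V).det) univ :=
    AnalyticOnNhd.matrix_det_s11 <| AnalyticOnNhd.matrix_mul_apply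
      (AnalyticOnNhd.matrix_mul_apply (fun _ _ => analyticOnNhd_const) hF)
      fun _ _ => analyticOnNhd_const
  have hx₀ : (U * F x₀ * V).det ≠ 0 := by simp [hUV]
  filter_upwards [measure_eq_zero_iff_ae_notMem.mp (hdet.measure_setOf_eq_zero μ hx₀)]
    with x hx
  have hunit : IsUnit (U * F x * V) :=
    (Matrix.isUnit_iff_isUnit_det _).mpr (isUnit_iff_ne_zero.mpr hx)
  calc (F x₀).rank = (U * F x * V).rank := by
        rw [Matrix.rank_of_isUnit _ hunit, Fintype.card_fin]
    _ ≤ (U * F x).rank := Matrix.rank_mul_le_left _ _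
    _ ≤ (F x).rank := Matrix.rank_mul_le_right _ _

theorem Matrix.pow_mem_span_pow_lt_card_s11 {R ι : Type*} [CommRing R] [Nontrivial R] [Fintype ι]
    [DecidableEq ι] (A : Matrix ι ι R) (p : ℕ) :
    A ^ p ∈ Submodule.span R ((A ^ ·) '' Iio (Fintype.card ι)) := by
  rcases isEmpty_or_nonempty ι with hι | hι
  · rw [Subsingleton.elim (A ^ p) 0]
    exact Submodule.zero_mem _
  have hdeg : (Polynomial.X ^ p %ₘ A.charpoly).natDegree < Fintype.card ι := by
    rw [← A.charpoly_natDegree_eq_dim]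
    refine Polynomial.natDegree_modByMonic_lt _ A.charpoly_monic fun h =>
      (Fintype.card_pos (α := ι)).ne ?_
    rw [← A.charpoly_natDegree_eq_dim, h, Polynomial.natDegree_one]
  rw [A.pow_eq_aeval_mod_charpoly, Polynomial.aeval_eq_sum_range' hdeg]
  exact Submodule.sum_mem _ fun i hi => Submodule.smul_mem _ _ <|
    Submodule.subset_span ⟨i, Finset.mem_range.mp hi, rfl⟩

theorem Matrix.range_mulVecLin_fromCols_s11 {R m n₁ n₂ : Type*} [CommSemiring R] [Fintype n₁]
    [Fintype n₂] (M : Matrix m n₁ R) (N : Matrix m n₂ R) :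
    LinearMap.range (fromCols M N).mulVecLin =
      LinearMap.range M.mulVecLin ⊔ LinearMap.range N.mulVecLin := by
  have hcol : (fromCols M N).col = Sum.elim M.col N.col := by
    ext (_ | _) <;> rfl
  rw [Matrix.range_mulVecLin, Matrix.range_mulVecLin, Matrix.range_mulVecLin, hcol,
    Set.Sum.elim_range, Submodule.span_union]

theorem Matrix.rank_fromCols_mul_le {K m n₁ n₂ : Type*} [Field K] [Fintype m] [Fintype n₁]
    [Fintype n₂] [DecidableEq m] (M : Matrix m n₁ K) (N : Matrix m n₂ K) {P Q : Matrix m m K}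
    (hPQ : P * Q = 1)
    (hQ : ∀ v ∈ LinearMap.range M.mulVecLin, Q *ᵥ v ∈ LinearMap.range M.mulVecLin) :
    (fromCols M (P * N)).rank ≤ (fromCols M N).rank := by
  have hM : LinearMap.range M.mulVecLin ≤ (LinearMap.range M.mulVecLin).map P.mulVecLin :=
    fun v hv => ⟨Q *ᵥ v, hQ v hv, by simp [Matrix.mulVec_mulVec, hPQ]⟩
  have hrange : LinearMap.range (fromCols M (P * N)).mulVecLin ≤
      (LinearMap.range (fromCols M N).mulVecLin).map P.mulVecLin := by
    rw [range_mulVecLin_fromCols_s11, range_mulVecLin_fromCols_s11, Submodule.map_sup,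
      Matrix.mulVecLin_mul, LinearMap.range_comp]
    exact sup_le_sup_right hM _
  exact (Submodule.finrank_mono hrange).trans (Submodule.finrank_map_le _ _)

theorem Matrix.exp_mem_subalgebra {n : Type*} [Fintype n] [DecidableEq n]
    {S : Subalgebra ℝ (Matrix n n ℝ)} {M : Matrix n n ℝ} (hM : M ∈ S) :
    NormedSpace.exp M ∈ S :=
  NormedSpace.exp_mem (R := ℝ) (s := S) (Subalgebra.toSubmodule S).closed_of_finiteDimensional hM

section ControllabilityMatrix

variable {n m : ℕ}

theorem col_pow_mul_mem_span_col_ctrlMat (A : Matrix (Fin n) (Fin n) ℝ)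
    (B : Matrix (Fin n) (Fin m) ℝ) (p : ℕ) (j : Fin m) :
    (A ^ p * B).col j ∈ Submodule.span ℝ (range (ctrlMat A B).col) := by
  suffices h : ∀ M ∈ Submodule.span ℝ ((A ^ ·) '' Iio n),
      (M * B).col j ∈ Submodule.span ℝ (range (ctrlMat A B).col) by
    simpa using h _ (by simpa using A.pow_mem_span_pow_lt_card_s11 p)
  intro M hM
  induction hM using Submodule.span_induction with
  | mem M hM =>
    obtain ⟨i, hi, rfl⟩ := hM
    exact Submodule.subset_span ⟨(⟨i, hi⟩, j), rfl⟩
  | zero =>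
    rw [Matrix.zero_mul]
    exact Submodule.zero_mem _
  | add M N _ _ hM hN =>
    rw [Matrix.add_mul]
    exact Submodule.add_mem _ hM hN
  | smul c M _ hM =>
    rw [Matrix.smul_mul]
    exact Submodule.smul_mem _ c hM

theorem mulVec_mem_range_ctrlMat (A : Matrix (Fin n) (Fin n) ℝ) (B : Matrix (Fin n) (Fin m) ℝ)
    {v : Fin n → ℝ} (hv : v ∈ LinearMap.range (ctrlMat A B).mulVecLin) :
    A *ᵥ v ∈ LinearMap.range (ctrlMat A B).mulVecLin := by
  have hcol : ∀ c : Fin n × Fin m,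
      (A * ctrlMat A B).col c = (A ^ (c.1 + 1 : ℕ) * B).col c.2 := by
    rintro ⟨k, j⟩
    ext i
    rw [pow_succ', Matrix.mul_assoc]
    rfl
  have hle : LinearMap.range (A * ctrlMat A B).mulVecLin ≤
      LinearMap.range (ctrlMat A B).mulVecLin := by
    rw [Matrix.range_mulVecLin, Matrix.range_mulVecLin, Submodule.span_le]
    rintro _ ⟨c, rfl⟩
    rw [hcol]
    exact col_pow_mul_mem_span_col_ctrlMat A B _ _
  obtain ⟨w, rfl⟩ := hv
  exact hle ⟨w, by simp [Matrix.mulVec_mulVec]⟩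

theorem mulVec_mem_range_ctrlMat_of_mem_adjoin (A : Matrix (Fin n) (Fin n) ℝ)
    (B : Matrix (Fin n) (Fin m) ℝ) {M : Matrix (Fin n) (Fin n) ℝ}
    (hM : M ∈ Algebra.adjoin ℝ {A}) {v : Fin n → ℝ}
    (hv : v ∈ LinearMap.range (ctrlMat A B).mulVecLin) :
    M *ᵥ v ∈ LinearMap.range (ctrlMat A B).mulVecLin := by
  induction hM using Algebra.adjoin_induction generalizing v with
  | mem M hM =>
    rw [mem_singleton_iff.mp hM]
    exact mulVec_mem_range_ctrlMat A B hv
  | algebraMap c =>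
    rw [Algebra.algebraMap_eq_smul_one, Matrix.smul_mulVec, Matrix.one_mulVec]
    exact Submodule.smul_mem _ c hv
  | add M N _ _ hM hN => simpa [Matrix.add_mulVec] using Submodule.add_mem _ (hM hv) (hN hv)
  | mul M N _ _ hM hN => simpa [Matrix.mulVec_mulVec] using hM (hN hv)

end ControllabilityMatrix

/-- For almost all `h ∈ ℝ`, `rank [C₂, e^{A₂h}C₁] = rank [C₂, C₁]`
(Ezzine–Haddad's conjecture for `N = 2`). -/
theorem rank_exp_concat_ae_eq {n m₁ m₂ : ℕ}
    (A₁ : Matrix (Fin n) (Fin n) ℝ) (B₁ : Matrix (Fin n) (Fin m₁) ℝ)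
    (A₂ : Matrix (Fin n) (Fin n) ℝ) (B₂ : Matrix (Fin n) (Fin m₂) ℝ) :
    ∀ᵐ h : ℝ ∂volume,
      (Matrix.fromCols (ctrlMat A₂ B₂)
          (NormedSpace.exp (h • A₂) * ctrlMat A₁ B₁)).rank =
        (Matrix.fromCols (ctrlMat A₂ B₂) (ctrlMat A₁ B₁)).rank := by
  have hF : ∀ i j, AnalyticOnNhd ℝ
      (fun h : ℝ => fromCols (ctrlMat A₂ B₂) (NormedSpace.exp (h • A₂) * ctrlMat A₁ B₁) i j)
      univ := by
    rintro i (j | j)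
    · simp only [fromCols_apply_inl]
      exact analyticOnNhd_const
    · simp only [fromCols_apply_inr]
      exact AnalyticOnNhd.matrix_mul_apply (G := fun _ => ctrlMat A₁ B₁)
        A₂.analyticOnNhd_exp_smul_apply (fun _ _ => analyticOnNhd_const) i j
  filter_upwards [ae_rank_le_rank_of_analyticOnNhd volume hF 0] with h hh
  refine le_antisymm ?_ (by simpa using hh)
  have hinv : NormedSpace.exp (h • A₂) * NormedSpace.exp ((-h) • A₂) = 1 := by
    rw [← Matrix.exp_add_of_commute _ _ ((Commute.refl A₂).smul_left _ |>.smul_right _),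
      ← add_smul, add_neg_cancel, zero_smul, NormedSpace.exp_zero]
  have hexp : NormedSpace.exp ((-h) • A₂) ∈ Algebra.adjoin ℝ {A₂} :=
    exp_mem_subalgebra (Subalgebra.smul_mem _ (Algebra.self_mem_adjoin_singleton ℝ A₂) _)
  exact rank_fromCols_mul_le _ _ hinv fun v hv =>
    mulVec_mem_range_ctrlMat_of_mem_adjoin A₂ B₂ hexp hv
end

section
/- There exist 3×3 real structured matrices (sparsity patterns) for three subsystems (A_1,B_1), (A_2,B_2), (A_3,B_3) with (A_3,B_3) structurally equivalent to (A_1,B_1), such that the generic rank of [C_3, C_2, C_1] is 2, while for almost all parameter values and almost all h_2, h_3 > 0, rank [C_3, e^{A_3h_3}C_2, e^{A_3h_3}e^{A_2h_2}C_1] = 3. Concretely, take A_1 with single nonzero entry (2,1), B_1 = e_1, A_2 with single nonzero entry (3,2), B_2 = 0, (A_3,B_3) = (A_1,B_1)-patterned: then C_2 = 0 and rank[C_3,C_1] = 2, but for generic parameters rank[C_3, e^{A_3h_3}e^{A_2h_2}C_1] = 3. -/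
/-!
Matrices with the sparsity pattern of `A₁` map `span {e₁, e₂}` into itself and `B₁` lies in it,
while `B₂ = 0` kills `C₂`; so every column of `[C₃, C₂, C₁]` has third entry zero and the rank is
at most 2. Since `A₂² = 0`, the flow `e^{h₂A₂} = 1 + h₂A₂` moves the column `A₁B₁ = a₁b₁e₂` of `C₁`
out of that plane, to `a₁b₁(e₂ + h₂a₂e₃)`, and `e^{h₃A₃}` fixes the result. Together with
`B₃ = b₃e₁` and `A₃B₃ = a₃b₃e₂` this gives a triangular minor of determinant `a₁a₂a₃b₁b₃²h₂`,
which vanishes only on a null set.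
-/

open MeasureTheory

/-- The controllability matrix `C = [B, AB, A²B]` for `n = 3` (columns `Fin 3 × Fin 1`). -/
def ctrlMat3 (A : Matrix (Fin 3) (Fin 3) ℝ) (B : Matrix (Fin 3) (Fin 1) ℝ) :
    Matrix (Fin 3) (Fin 3 × Fin 1) ℝ :=
  fun i p => (A ^ (p.1 : ℕ) * B) i p.2

open Matrix

theorem NormedSpace.exp_eq_one_add_of_sq_eq_zero {𝔸 : Type*} [Ring 𝔸] [Algebra ℚ 𝔸]
    [TopologicalSpace 𝔸] [IsTopologicalRing 𝔸] [T2Space 𝔸] {x : 𝔸} (hx : x ^ 2 = 0) :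
    exp x = 1 + x := by
  simp only [exp_eq_tsum ℚ]
  rw [tsum_eq_sum (s := Finset.range 2)]
  · simp [Finset.sum_range_succ]
  · intro n hn
    obtain ⟨k, rfl⟩ := Nat.exists_eq_add_of_le (not_lt.mp (Finset.mem_range.not.mp hn))
    rw [pow_add, hx, zero_mul, smul_zero]

theorem Matrix.rank_le_card_sub_one_of_row_eq_zero {K m n : Type*} [Field K] [Fintype m]
    [Fintype n] [DecidableEq m] (A : Matrix m n K) {i : m} (h : A i = 0) :
    A.rank ≤ Fintype.card m - 1 := by
  have := A.rank_le_card_of_support_subset (Finset.univ.erase i) fun j hj => by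
    rw [Finset.coe_erase, Finset.coe_univ]
    exact ⟨trivial, by rintro rfl; exact hj h⟩
  simpa using this

theorem Matrix.card_le_rank_of_det_submatrix_ne_zero {K m n ι : Type*} [Field K] [Fintype n]
    [Fintype ι] [DecidableEq ι] (A : Matrix m n K) (r : ι → m) (c : ι → n)
    (h : (A.submatrix r c).det ≠ 0) : Fintype.card ι ≤ A.rank :=
  calc Fintype.card ι = (A.submatrix r c).rank :=
        (rank_of_isUnit _ ((isUnit_iff_isUnit_det _).mpr h.isUnit)).symm
    _ ≤ A.rank := rank_submatrix_le A r c

theorem ctrlMat3_zero_right (A : Matrix (Fin 3) (Fin 3) ℝ) : ctrlMat3 A 0 = 0 := by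
  ext i p
  simp [ctrlMat3]

theorem ctrlMat3_row_eq_zero {A : Matrix (Fin 3) (Fin 3) ℝ} {B : Matrix (Fin 3) (Fin 1) ℝ}
    {i : Fin 3} (hA : A i = 0) (hB : B i = 0) : ctrlMat3 A B i = 0 := by
  ext ⟨k, l⟩
  rcases Fin.eq_zero_or_eq_succ k with rfl | ⟨k, rfl⟩
  · simp [ctrlMat3, hB]
  · simp [ctrlMat3, pow_succ', mul_apply, hA]

theorem exp_smul_A₁ (h a : ℝ) :
    NormedSpace.exp (h • !![0,0,0; a,0,0; 0,0,0]) = !![1,0,0; h*a,1,0; 0,0,(1:ℝ)] := by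
  rw [NormedSpace.exp_eq_one_add_of_sq_eq_zero]
  · simp [one_fin_three]
  · ext i j; fin_cases i <;> fin_cases j <;> simp [sq, mul_apply, Fin.sum_univ_three]

theorem exp_smul_A₂ (h a : ℝ) :
    NormedSpace.exp (h • !![0,0,0; 0,0,0; 0,a,0]) = !![1,0,0; 0,1,0; 0,h*a,(1:ℝ)] := by
  rw [NormedSpace.exp_eq_one_add_of_sq_eq_zero]
  · simp [one_fin_three]
  · ext i j; fin_cases i <;> fin_cases j <;> simp [sq, mul_apply, Fin.sum_univ_three]

theorem ctrlMat3_A₁_row_two (a b : ℝ) : ctrlMat3 !![0,0,0; a,0,0; 0,0,0] !![b; 0; 0] 2 = 0 :=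
  ctrlMat3_row_eq_zero (by ext j; fin_cases j <;> rfl) (by ext j; fin_cases j; rfl)

theorem submatrix_fromCols_ctrlMat3_A₁ (a b : ℝ)
    (Y : Matrix (Fin 3) (Fin 3 × Fin 1 ⊕ Fin 3 × Fin 1) ℝ) :
    (fromCols (ctrlMat3 !![0,0,0; a,0,0; 0,0,0] !![b; 0; 0]) Y).submatrix ![0, 1]
        ![.inl (0, 0), .inl (1, 0)] = !![b, 0; 0, a * b] := by
  ext i j
  fin_cases i <;> fin_cases j <;> simp [ctrlMat3, mul_apply, Fin.sum_univ_three]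

theorem submatrix_fromCols_ctrlMat3_flow (a₁ b₁ a₂ a₃ b₃ h₂ h₃ : ℝ)
    (Y : Matrix (Fin 3) (Fin 3 × Fin 1) ℝ) :
    (fromCols (ctrlMat3 !![0,0,0; a₃,0,0; 0,0,0] !![b₃; 0; 0])
      (fromCols Y
        (NormedSpace.exp (h₃ • !![0,0,0; a₃,0,0; 0,0,0]) *
          NormedSpace.exp (h₂ • !![0,0,0; 0,0,0; 0,a₂,0]) *
          ctrlMat3 !![0,0,0; a₁,0,0; 0,0,0] !![b₁; 0; 0]))).submatrix id
        ![.inl (0, 0), .inl (1, 0), .inr (.inr (1, 0))]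
      = !![b₃, 0, 0; 0, a₃ * b₃, a₁ * b₁; 0, 0, h₂ * a₂ * (a₁ * b₁)] := by
  rw [exp_smul_A₁, exp_smul_A₂]
  ext i j
  fin_cases i <;> fin_cases j <;>
    simp [ctrlMat3, mul_apply, Fin.sum_univ_three, vecMul, dotProduct]

/-- Counterexample to Ezzine–Haddad's conjecture for `N = 3`: with
`A₁(a)` having single nonzero entry `(2,1)`, `B₁(b) = b·e₁`, `A₂(a)` having single nonzero
entry `(3,2)`, `B₂ = 0`, and `(A₃,B₃)` patterned like `(A₁,B₁)` with independent parameters,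
the generic rank of `[C₃, C₂, C₁]` is `2`, while for almost all parameters and almost all
`h₂, h₃ > 0`, `rank [C₃, e^{A₃h₃}C₂, e^{A₃h₃}e^{A₂h₂}C₁] = 3`. -/
theorem ezzine_haddad_counterexample :
    let A₁ : ℝ → Matrix (Fin 3) (Fin 3) ℝ := fun a => !![0,0,0; a,0,0; 0,0,0]
    let B₁ : ℝ → Matrix (Fin 3) (Fin 1) ℝ := fun b => !![b; 0; 0]
    let A₂ : ℝ → Matrix (Fin 3) (Fin 3) ℝ := fun a => !![0,0,0; 0,0,0; 0,a,0]
    let B₂ : Matrix (Fin 3) (Fin 1) ℝ := 0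
    -- generic rank of `[C₃, C₂, C₁]` is 2:
    (∀ a₁ b₁ a₂ a₃ b₃ : ℝ,
      (Matrix.fromCols (ctrlMat3 (A₁ a₃) (B₁ b₃))
        (Matrix.fromCols (ctrlMat3 (A₂ a₂) B₂) (ctrlMat3 (A₁ a₁) (B₁ b₁)))).rank ≤ 2) ∧
    (∃ a₁ b₁ a₂ a₃ b₃ : ℝ,
      (Matrix.fromCols (ctrlMat3 (A₁ a₃) (B₁ b₃))
        (Matrix.fromCols (ctrlMat3 (A₂ a₂) B₂) (ctrlMat3 (A₁ a₁) (B₁ b₁)))).rank = 2) ∧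
    -- while generically `rank [C₃, e^{A₃h₃}C₂, e^{A₃h₃}e^{A₂h₂}C₁] = 3`:
    (∀ᵐ p : ℝ × ℝ × ℝ × ℝ × ℝ × ℝ × ℝ ∂volume,
      match p with
      | (a₁, b₁, a₂, a₃, b₃, h₂, h₃) =>
        0 < h₂ → 0 < h₃ →
          (Matrix.fromCols (ctrlMat3 (A₁ a₃) (B₁ b₃))
            (Matrix.fromCols
              (NormedSpace.exp (h₃ • A₁ a₃) * ctrlMat3 (A₂ a₂) B₂)
              (NormedSpace.exp (h₃ • A₁ a₃) * NormedSpace.exp (h₂ • A₂ a₂) *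
                ctrlMat3 (A₁ a₁) (B₁ b₁)))).rank = 3) := by
  intro A₁ B₁ A₂ B₂
  have hrank_le : ∀ a₁ b₁ a₂ a₃ b₃ : ℝ, (fromCols (ctrlMat3 (A₁ a₃) (B₁ b₃))
      (fromCols (ctrlMat3 (A₂ a₂) B₂) (ctrlMat3 (A₁ a₁) (B₁ b₁)))).rank ≤ 2 := by
    intro a₁ b₁ a₂ a₃ b₃
    refine (rank_le_card_sub_one_of_row_eq_zero _ (i := 2) ?_).trans_eq rfl
    ext (j | j | j) <;> simp [A₁, B₁, B₂, ctrlMat3_zero_right, ctrlMat3_A₁_row_two]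
  refine ⟨hrank_le, ⟨1, 1, 1, 1, 1, (hrank_le ..).antisymm ?_⟩, ?_⟩
  · refine card_le_rank_of_det_submatrix_ne_zero (ι := Fin 2) _ ![0, 1]
      ![.inl (0, 0), .inl (1, 0)] ?_
    rw [submatrix_fromCols_ctrlMat3_A₁]
    simp [det_fin_two]
  · have hcoord : ∀ᵐ p : ℝ × ℝ × ℝ × ℝ × ℝ × ℝ × ℝ ∂volume,
        p.1 ≠ 0 ∧ p.2.1 ≠ 0 ∧ p.2.2.1 ≠ 0 ∧ p.2.2.2.1 ≠ 0 ∧ p.2.2.2.2.1 ≠ 0 := by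
      have nz := fun {f : ℝ × ℝ × ℝ × ℝ × ℝ × ℝ × ℝ → ℝ}
        (hf : Measure.QuasiMeasurePreserving f volume volume) => hf.ae (Measure.ae_ne _ 0)
      refine .and (nz ?_) (.and (nz ?_) (.and (nz ?_) (.and (nz ?_) (nz ?_)))) <;> fun_prop
    filter_upwards [hcoord] with ⟨a₁, b₁, a₂, a₃, b₃, h₂, h₃⟩ ⟨ha₁, hb₁, ha₂, ha₃, hb₃⟩ hh₂ _
    refine le_antisymm ((rank_le_card_height _).trans_eq (Fintype.card_fin 3)) ?_
    refine card_le_rank_of_det_submatrix_ne_zero (ι := Fin 3) _ id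
      ![.inl (0, 0), .inl (1, 0), .inr (.inr (1, 0))] ?_
    rw [submatrix_fromCols_ctrlMat3_flow]
    simp [det_fin_three, ha₁, hb₁, ha₂, ha₃, hb₃, hh₂.ne']
end

section
/- With the greedy setting of Proposition on Algorithm 1: for N ≥ 3 and each t ∈ {0,…,N−2}, the greedy output satisfies |Ṽ_k| ≥ f(t), where f(t) = (t/(N−1))|Ṽ*| + [ (N−t−1)/(N−1) + Σ_{j=1}^{t} (N−t−1)/(N−j) − t ]·|V_{i₁*}|, with V_{i₁*} the set chosen in the first greedy iteration and Ṽ* the optimal union. -/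
/-!
Write `G_t` for the union of the first `t` greedy picks. A collection of the optimal selection that
the greedy algorithm has already used contributes at most `|V_{i₁*}|`, since the first pick is a
largest single set. An unused one, cut down to its part outside `G_t`, is still a candidate at step
`t`, so it adds at most `|G_{t+1}| - |G_t|`. Summing over the `N - t` unused collections gives
`(N - t) |G_{t+1}| ≥ (N - t - 1) |G_t| + |Ṽ*| - t |V_{i₁*}|`. The bound `f` satisfies the same
recursion with equality, `(N - t - 1) f(t + 1) = (N - t - 2) f(t) + |Ṽ*| - (t + 1) |V_{i₁*}|`,
and `f(0) = |V_{i₁*}| = |G_1|`, so induction gives `f(t) ≤ |G_{t+1}| ≤ |G_N|`.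
-/

open Finset

variable {X : Type*} [Fintype X] [DecidableEq X]

/-- The union of the greedy picks made before iteration `t`. -/
def greedyUnion (g : ℕ → Finset X) (t : ℕ) : Finset X := (Finset.range t).biUnion g

/-- The hypotheses modelling problem `P` and the greedy Algorithm 1:
`U i` is the (nonempty, downward-closed) family of candidate sets of collection `i`;
`Vstar` is an optimal selection; at iteration `t < N` the greedy algorithm picks the
not-yet-used collection `ord t` and a set `g t ∈ U (ord t)` maximizing the size of the
union with everything picked so far. -/
structure GreedySetting (N : ℕ) (U : Fin N → Set (Finset X)) (Vstar : Fin N → Finset X)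
    (ord : ℕ → Fin N) (g : ℕ → Finset X) : Prop where
  nonempty : ∀ i, (U i).Nonempty
  downClosed : ∀ i, ∀ V ∈ U i, ∀ W ⊆ V, W ∈ U i
  star_mem : ∀ i, Vstar i ∈ U i
  star_opt : ∀ W : Fin N → Finset X, (∀ i, W i ∈ U i) →
    (Finset.univ.biUnion W).card ≤ (Finset.univ.biUnion Vstar).card
  ord_inj : ∀ s t, s < N → t < N → ord s = ord t → s = t
  pick_mem : ∀ t < N, g t ∈ U (ord t)
  pick_greedy : ∀ t < N, ∀ i : Fin N, (∀ s < t, ord s ≠ i) → ∀ V ∈ U i,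
    (greedyUnion g t ∪ V).card ≤ (greedyUnion g t ∪ g t).card

section

variable {α : Type*} [DecidableEq α]

theorem card_biUnion_le_card_add_sum_card_sdiff {ι : Type*} (s : Finset ι) (V : ι → Finset α)
    (G : Finset α) : (s.biUnion V).card ≤ G.card + ∑ i ∈ s, (V i \ G).card := by
  have hsub : s.biUnion V ⊆ G ∪ s.biUnion fun i => V i \ G := by
    intro x hx
    obtain ⟨i, hi, hxi⟩ := mem_biUnion.1 hx
    by_cases hxG : x ∈ G
    · exact mem_union_left _ hxG
    · exact mem_union_right _ (mem_biUnion.2 ⟨i, hi, mem_sdiff.2 ⟨hxi, hxG⟩⟩)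
  calc (s.biUnion V).card ≤ (G ∪ s.biUnion fun i => V i \ G).card := card_le_card hsub
    _ ≤ G.card + (s.biUnion fun i => V i \ G).card := card_union_le _ _
    _ ≤ G.card + ∑ i ∈ s, (V i \ G).card := Nat.add_le_add_left card_biUnion_le _

theorem greedyUnion_mono (g : ℕ → Finset α) {s t : ℕ} (h : s ≤ t) :
    greedyUnion g s ⊆ greedyUnion g t :=
  biUnion_subset_biUnion_of_subset_left _ (range_subset_range.2 h)

theorem greedyUnion_succ (g : ℕ → Finset α) (t : ℕ) :
    greedyUnion g (t + 1) = greedyUnion g t ∪ g t := by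
  rw [greedyUnion, range_add_one, biUnion_insert, union_comm, greedyUnion]

theorem greedyUnion_one (g : ℕ → Finset α) : greedyUnion g 1 = g 0 := by
  simp [greedyUnion]

namespace GreedySetting

variable {N : ℕ} {U : Fin N → Set (Finset α)} {Vstar : Fin N → Finset α} {ord : ℕ → Fin N}
  {g : ℕ → Finset α}

theorem card_le_card_pick_zero (hs : GreedySetting N U Vstar ord g) {i : Fin N} {V : Finset α}
    (hV : V ∈ U i) : V.card ≤ (g 0).card := by
  simpa [greedyUnion] using hs.pick_greedy 0 (Fin.pos i) i (by simp) V hV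

theorem card_image_ord_range (hs : GreedySetting N U Vstar ord g) {t : ℕ} (ht : t ≤ N) :
    ((range t).image ord).card = t := by
  rw [card_image_of_injOn, card_range]
  intro a ha b hb hab
  exact hs.ord_inj a b (by simp at ha; omega) (by simp at hb; omega) hab

theorem card_add_card_sdiff_le (hs : GreedySetting N U Vstar ord g) {t : ℕ} (ht : t < N)
    {i : Fin N} (hi : ∀ s < t, ord s ≠ i) :
    (greedyUnion g t).card + (Vstar i \ greedyUnion g t).card ≤ (greedyUnion g (t + 1)).card := by
  have hmem : Vstar i \ greedyUnion g t ∈ U i :=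
    hs.downClosed i _ (hs.star_mem i) _ sdiff_subset
  rw [← card_union_of_disjoint disjoint_sdiff, greedyUnion_succ]
  exact hs.pick_greedy t ht i hi _ hmem

theorem card_star_add_mul_le (hs : GreedySetting N U Vstar ord g) {t : ℕ} (ht : t < N) :
    (univ.biUnion Vstar).card + (N - t) * (greedyUnion g t).card ≤
      (greedyUnion g t).card + t * (g 0).card + (N - t) * (greedyUnion g (t + 1)).card := by
  set G := greedyUnion g t
  set T := (range t).image ord
  have hT : T.card = t := hs.card_image_ord_range ht.le
  have hused : ∑ i ∈ T, (Vstar i \ G).card ≤ t * (g 0).card := by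
    calc ∑ i ∈ T, (Vstar i \ G).card ≤ ∑ _i ∈ T, (g 0).card :=
          sum_le_sum fun i _ => (card_le_card sdiff_subset).trans
            (hs.card_le_card_pick_zero (hs.star_mem i))
      _ = t * (g 0).card := by rw [sum_const, hT, smul_eq_mul]
  have hunused : ∑ i ∈ Tᶜ, (G.card + (Vstar i \ G).card) ≤
      ∑ _i ∈ Tᶜ, (greedyUnion g (t + 1)).card :=
    sum_le_sum fun i hi => hs.card_add_card_sdiff_le ht fun s hs hsi =>
      mem_compl.1 hi (mem_image.2 ⟨s, mem_range.2 hs, hsi⟩)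
  rw [sum_add_distrib, sum_const, sum_const, card_compl, hT, Fintype.card_fin, smul_eq_mul,
    smul_eq_mul] at hunused
  have hstar := card_biUnion_le_card_add_sum_card_sdiff univ Vstar G
  rw [← sum_add_sum_compl T] at hstar
  linarith

theorem greedy_recursion (hs : GreedySetting N U Vstar ord g) {t : ℕ} (ht : t < N) :
    ((univ.biUnion Vstar).card : ℝ) - t * (g 0).card + ((N : ℝ) - t - 1) * (greedyUnion g t).card ≤
      ((N : ℝ) - t) * (greedyUnion g (t + 1)).card := by
  have h := (Nat.cast_le (α := ℝ)).2 (hs.card_star_add_mul_le ht)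
  push_cast [Nat.cast_sub ht.le] at h
  linarith

end GreedySetting

end

/-- `f(t)` of the paper, with `S = |Ṽ*|` and `a = |V_{i₁*}|`. -/
noncomputable def refinedBound (N : ℕ) (S a : ℝ) (t : ℕ) : ℝ :=
  ((t : ℝ) / ((N : ℝ) - 1)) * S +
    (((N : ℝ) - t - 1) / ((N : ℝ) - 1) +
        (∑ j ∈ Finset.Icc 1 t, ((N : ℝ) - t - 1) / ((N : ℝ) - j)) - t) * a

section RefinedBound

variable {N : ℕ} {S a : ℝ}

theorem refinedBound_zero (hN : (N : ℝ) - 1 ≠ 0) : refinedBound N S a 0 = a := by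
  simp only [refinedBound, Nat.cast_zero, sub_zero, Icc_eq_empty_of_lt zero_lt_one, sum_empty]
  field_simp
  ring

theorem refinedBound_succ (hN : (N : ℝ) - 1 ≠ 0) {n : ℕ} (hn : (N : ℝ) - n - 1 ≠ 0) :
    ((N : ℝ) - n - 1) * refinedBound N S a (n + 1) =
      ((N : ℝ) - n - 2) * refinedBound N S a n + S - ((n : ℝ) + 1) * a := by
  simp only [refinedBound, div_eq_mul_inv _ ((N : ℝ) - _), ← mul_sum]
  rw [sum_Icc_succ_top (by omega : 1 ≤ n + 1)]
  push_cast
  rw [show (N : ℝ) - ((n : ℝ) + 1) = N - n - 1 by ring]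
  field_simp
  ring

theorem refinedBound_le_of_recursion (G : ℕ → ℝ) (h₁ : a ≤ G 1)
    (hrec : ∀ τ : ℕ, 1 ≤ τ → τ + 2 ≤ N →
      S - τ * a + ((N : ℝ) - τ - 1) * G τ ≤ ((N : ℝ) - τ) * G (τ + 1))
    (t : ℕ) (ht : t + 2 ≤ N) : refinedBound N S a t ≤ G (t + 1) := by
  have hN : (N : ℝ) - 1 ≠ 0 := by
    have : (2 : ℝ) ≤ N := by exact_mod_cast le_of_add_le_right ht
    linarith
  induction t with
  | zero => rwa [refinedBound_zero hN]
  | succ n ih =>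
    have hNn : (n : ℝ) + 3 ≤ N := by exact_mod_cast ht
    have hpos : (0 : ℝ) < (N : ℝ) - n - 1 := by linarith
    have hrec' := hrec (n + 1) (by omega) ht
    push_cast at hrec'
    refine le_of_mul_le_mul_left ?_ hpos
    calc ((N : ℝ) - n - 1) * refinedBound N S a (n + 1)
        = ((N : ℝ) - n - 2) * refinedBound N S a n + S - ((n : ℝ) + 1) * a :=
          refinedBound_succ hN hpos.ne'
      _ ≤ ((N : ℝ) - n - 2) * G (n + 1) + S - ((n : ℝ) + 1) * a := by
          gcongr
          · linarith
          · exact ih (by omega)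
      _ ≤ ((N : ℝ) - n - 1) * G (n + 2) := by linarith

end RefinedBound

theorem greedy_refined_bound_general {N : ℕ} (U : Fin N → Set (Finset X))
    (Vstar : Fin N → Finset X) (ord : ℕ → Fin N) (g : ℕ → Finset X)
    (hs : GreedySetting N U Vstar ord g) :
    ∀ t : ℕ, t + 2 ≤ N →
      ((greedyUnion g N).card : ℝ) ≥
        ((t : ℝ) / ((N : ℝ) - 1)) * (Finset.univ.biUnion Vstar).card +
          (((N : ℝ) - t - 1) / ((N : ℝ) - 1) +
              (∑ j ∈ Finset.Icc 1 t, ((N : ℝ) - t - 1) / ((N : ℝ) - j)) - t) *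
            ((g 0).card : ℝ) := by
  intro t ht
  calc refinedBound N (univ.biUnion Vstar).card (g 0).card t
      ≤ (greedyUnion g (t + 1)).card :=
        refinedBound_le_of_recursion (fun n => ((greedyUnion g n).card : ℝ))
          (by rw [greedyUnion_one]) (fun τ _ hτ => hs.greedy_recursion (by omega)) t ht
    _ ≤ (greedyUnion g N).card := by
        exact_mod_cast card_le_card (greedyUnion_mono g (by omega))

/-- Refined greedy bound: for `N ≥ 3` and each `t ∈ {0,…,N−2}`, the greedy output satisfies
`|Ṽ_k| ≥ f(t) = (t/(N−1))|Ṽ*| + [(N−t−1)/(N−1) + Σ_{j=1}^{t}(N−t−1)/(N−j) − t]·|V_{i₁*}|`,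
where `V_{i₁*} = g 0` is the first greedy pick. -/
theorem greedy_refined_bound {N : ℕ} (hN : 3 ≤ N) (U : Fin N → Set (Finset X))
    (Vstar : Fin N → Finset X) (ord : ℕ → Fin N) (g : ℕ → Finset X)
    (hs : GreedySetting N U Vstar ord g) :
    ∀ t : ℕ, t + 2 ≤ N →
      ((greedyUnion g N).card : ℝ) ≥
        ((t : ℝ) / ((N : ℝ) - 1)) * (Finset.univ.biUnion Vstar).card +
          (((N : ℝ) - t - 1) / ((N : ℝ) - 1) +
              (∑ j ∈ Finset.Icc 1 t, ((N : ℝ) - t - 1) / ((N : ℝ) - j)) - t) *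
            ((g 0).card : ℝ) :=
  greedy_refined_bound_general U Vstar ord g hs
end
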